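/- For any lists p and y* over a type α with decidable equality, the minimum of D(p ++ s, y*) over all lists s : List α equals m(p, y*) = min over 0 ≤ j ≤ |y*| of D(p, y*_{<j}); i.e., the infimum over all completions of the prefix p equals the minimum edit distance between p and the prefixes of y*. -/

import Mathlib

namespace Levenshtein

/-- Costs for the Levenshtein distance (as in the Mathlib of December 2024). -/
structure Cost (α β δ : Type*) where
  delete : α → δ
  insert : β → δ
  substitute : α → β → δ

/-- Unit costs for deletion, insertion and substitution of distinct letters. -/
def defaultCost {α : Type*} [DecidableEq α] : Cost α α ℕ where
  delete _ := 1
  insert _ := 1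
  substitute a b := if a = b then 0 else 1

/-- One step of the dynamic program computing the suffix Levenshtein distances. -/
def impl {α β δ : Type*} [AddZeroClass δ] [Min δ] (C : Cost α β δ)
    (xs : List α) (y : β) (d : {r : List δ // 0 < r.length}) : {r : List δ // 0 < r.length} :=
  let ⟨ds, w⟩ := d
  xs.zip (ds.zip ds.tail) |>.foldr
    (init := ⟨[ds.getLast (List.ne_nil_of_length_pos w) + C.insert y], by simp⟩)
    (fun ⟨x, d₀, d₁⟩ ⟨r, w⟩ =>
      ⟨min (C.delete x + r[0]) (min (C.insert y + d₀) (C.substitute x y + d₁)) :: r, by simp⟩)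

end Levenshtein

/-- Levenshtein distances from each suffix of `xs` to `ys`. -/
def suffixLevenshtein {α β δ : Type*} [AddZeroClass δ] [Min δ] (C : Levenshtein.Cost α β δ)
    (xs : List α) (ys : List β) : {r : List δ // 0 < r.length} :=
  ys.foldr
    (Levenshtein.impl C xs)
    (xs.foldr (init := ⟨[0], by simp⟩) (fun a ⟨r, w⟩ => ⟨(C.delete a + r[0]) :: r, by simp⟩))

/-- The Levenshtein distance with costs `C` (as in the Mathlib of December 2024). -/
def levenshtein {α β δ : Type*} [AddZeroClass δ] [Min δ] (C : Levenshtein.Cost α β δ)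
    (xs : List α) (ys : List β) : δ :=
  let ⟨r, w⟩ := suffixLevenshtein C xs ys
  r[0]

/-- Unit-cost Levenshtein edit distance between two lists. -/
def editDist {α : Type*} [DecidableEq α] (u v : List α) : ℕ :=
  levenshtein Levenshtein.defaultCost u v

/-- `rowMin p y = min over 0 ≤ j ≤ |y|` of the edit distance between `p` and `y.take j`. -/
def rowMin {α : Type*} [DecidableEq α] (p y : List α) : ℕ :=
  (Finset.range (y.length + 1)).inf' (by simp) (fun j => editDist p (y.take j))

/-!
Cutting `y*` at an optimal `j` and completing `p` by the rest `y*.drop j` attains `m(p, y*)`,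
because appending a common suffix to both sides never increases the edit distance. Conversely,
`m(p, y*) ≤ D(p ++ s, y*)` for every `s`, by induction on `p` and `y*` along the recurrence of `D`:
`m` obeys the same three one-step bounds as `D`, and once `p` is used up the remaining cost is `0`
because `y*` can be cut right there.
-/

section Recurrence

variable {α β δ : Type*} [AddZeroClass δ] [Min δ] {C : Levenshtein.Cost α β δ}

theorem Levenshtein.impl_length (xs : List α) (y : β) (d : {r : List δ // 0 < r.length})
    (w : d.1.length = xs.length + 1) :
    (Levenshtein.impl C xs y d).1.length = xs.length + 1 := by
  induction xs generalizing d with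
  | nil => rfl
  | cons x xs ih =>
    match d, w with
    | ⟨_ :: d₂ :: ds, _⟩, w => exact congrArg (· + 1) (ih ⟨d₂ :: ds, by simp⟩ (by simpa using w))

theorem Levenshtein.impl_cons (x : α) (xs : List α) (y : β) (d : {r : List δ // 0 < r.length})
    (d₀ : δ) (ds : List δ) (w : 0 < ds.length) (hd : d.1 = d₀ :: ds) :
    (Levenshtein.impl C (x :: xs) y d).1 =
      min (C.delete x + (Levenshtein.impl C xs y ⟨ds, w⟩).1[0]'(Levenshtein.impl C xs y ⟨ds, w⟩).2)
        (min (C.insert y + d₀) (C.substitute x y + ds[0])) ::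
        (Levenshtein.impl C xs y ⟨ds, w⟩).1 := by
  obtain ⟨r, _⟩ := d
  subst hd
  match ds, w with | _ :: _, _ => rfl

theorem suffixLevenshtein_length (xs : List α) (ys : List β) :
    (suffixLevenshtein C xs ys).1.length = xs.length + 1 := by
  induction ys with
  | nil => induction xs <;> simp_all [suffixLevenshtein]
  | cons y ys ih => exact Levenshtein.impl_length xs y _ ih

theorem suffixLevenshtein_nil_left (ys : List β) :
    (suffixLevenshtein C [] ys).1 = [levenshtein C [] ys] := by
  have h := suffixLevenshtein_length (C := C) [] ys
  show _ = [(suffixLevenshtein C [] ys).1[0]'(suffixLevenshtein C [] ys).2]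
  generalize suffixLevenshtein C [] ys = d at h ⊢
  match d, h with | ⟨[_], _⟩, _ => rfl

theorem suffixLevenshtein_cons_left (x : α) (xs : List α) (ys : List β) :
    (suffixLevenshtein C (x :: xs) ys).1 =
      levenshtein C (x :: xs) ys :: (suffixLevenshtein C xs ys).1 := by
  induction ys with
  | nil => rfl
  | cons y ys ih =>
    have E := Levenshtein.impl_cons (C := C) x xs y (suffixLevenshtein C (x :: xs) ys) _ _
      (by simp [suffixLevenshtein_length]) ih
    have L : levenshtein C (x :: xs) (y :: ys) = _ :=
      (List.getElem_of_eq E (by simp [E])).trans (List.getElem_cons_zero ..)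
    exact E.trans (congrArg₂ List.cons L.symm rfl)

theorem levenshtein_nil_nil : levenshtein C [] [] = 0 := by
  simp [levenshtein, suffixLevenshtein]

theorem levenshtein_nil_cons (y : β) (ys : List β) :
    levenshtein C [] (y :: ys) = levenshtein C [] ys + C.insert y := by
  have key : ∀ d : {r : List δ // 0 < r.length}, d.1 = [levenshtein C [] ys] →
      (Levenshtein.impl C [] y d).1 = [levenshtein C [] ys + C.insert y] := by
    rintro ⟨r, w⟩ rfl
    rfl
  have E := key _ (suffixLevenshtein_nil_left ys)
  exact List.getElem_of_eq E _

theorem levenshtein_cons_nil (x : α) (xs : List α) :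
    levenshtein C (x :: xs) [] = C.delete x + levenshtein C xs [] :=
  rfl

theorem levenshtein_cons_cons (x : α) (xs : List α) (y : β) (ys : List β) :
    levenshtein C (x :: xs) (y :: ys) =
      min (C.delete x + levenshtein C xs (y :: ys))
        (min (C.insert y + levenshtein C (x :: xs) ys)
          (C.substitute x y + levenshtein C xs ys)) := by
  have E := Levenshtein.impl_cons (C := C) x xs y (suffixLevenshtein C (x :: xs) ys) _ _
    (by simp [suffixLevenshtein_length]) (suffixLevenshtein_cons_left x xs ys)
  exact (List.getElem_of_eq E (by simp [E])).trans (List.getElem_cons_zero ..)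

end Recurrence

section EditDist

variable {α : Type*} [DecidableEq α]

theorem editDist_nil_left (v : List α) : editDist [] v = v.length := by
  induction v with
  | nil => exact levenshtein_nil_nil
  | cons y v ih =>
    rw [editDist, levenshtein_nil_cons, ← editDist, ih]
    rfl

theorem editDist_nil_right (u : List α) : editDist u [] = u.length := by
  induction u with
  | nil => exact levenshtein_nil_nil
  | cons x u ih =>
    rw [editDist, levenshtein_cons_nil, ← editDist, ih]
    exact Nat.add_comm _ _

theorem editDist_cons_cons (x : α) (u : List α) (y : α) (v : List α) :
    editDist (x :: u) (y :: v) =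
      min (1 + editDist u (y :: v))
        (min (1 + editDist (x :: u) v) ((if x = y then 0 else 1) + editDist u v)) :=
  levenshtein_cons_cons x u y v

theorem editDist_cons_left_le (x : α) (u v : List α) :
    editDist (x :: u) v ≤ 1 + editDist u v := by
  cases v with
  | nil => simp [editDist_nil_right, Nat.add_comm]
  | cons y v => rw [editDist_cons_cons]; exact min_le_left _ _

theorem editDist_cons_right_le (u : List α) (y : α) (v : List α) :
    editDist u (y :: v) ≤ 1 + editDist u v := by
  cases u with
  | nil => simp [editDist_nil_left, Nat.add_comm]
  | cons x u => rw [editDist_cons_cons]; exact (min_le_right _ _).trans (min_le_left _ _)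

theorem editDist_cons_cons_le (x : α) (u : List α) (y : α) (v : List α) :
    editDist (x :: u) (y :: v) ≤ (if x = y then 0 else 1) + editDist u v := by
  rw [editDist_cons_cons]
  exact (min_le_right _ _).trans (min_le_right _ _)

theorem editDist_self (s : List α) : editDist s s = 0 := by
  induction s with
  | nil => exact levenshtein_nil_nil
  | cons a s ih => simpa [ih] using editDist_cons_cons_le a s a s

theorem editDist_append_right_le (u v s : List α) :
    editDist (u ++ s) (v ++ s) ≤ editDist u v := by
  induction u generalizing v with
  | nil =>
    induction v with
    | nil => simp [editDist_self]
    | cons b v ih =>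
      calc editDist ([] ++ s) (b :: v ++ s)
          ≤ 1 + editDist ([] ++ s) (v ++ s) := editDist_cons_right_le _ _ _
        _ ≤ 1 + editDist [] v := by gcongr
        _ = editDist [] (b :: v) := by simp [editDist_nil_left, Nat.add_comm]
  | cons x u ihu =>
    induction v with
    | nil =>
      calc editDist (x :: u ++ s) ([] ++ s)
          ≤ 1 + editDist (u ++ s) ([] ++ s) := editDist_cons_left_le _ _ _
        _ ≤ 1 + editDist u [] := by gcongr; exact ihu []
        _ = editDist (x :: u) [] := by simp [editDist_nil_right, Nat.add_comm]
    | cons b v ihv =>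
      rw [editDist_cons_cons x u b v]
      refine le_min ?_ (le_min ?_ ?_)
      · exact (editDist_cons_left_le _ _ _).trans (by gcongr; exact ihu (b :: v))
      · exact (editDist_cons_right_le _ _ _).trans (Nat.add_le_add_left ihv 1)
      · exact (editDist_cons_cons_le _ _ _ _).trans (by gcongr; exact ihu v)

end EditDist

section RowMin

variable {α : Type*} [DecidableEq α]

theorem rowMin_le_editDist_take (p y : List α) {j : ℕ} (hj : j ≤ y.length) :
    rowMin p y ≤ editDist p (y.take j) :=
  Finset.inf'_le _ (Finset.mem_range_succ_iff.mpr hj)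

theorem exists_rowMin_eq_editDist_take (p y : List α) :
    ∃ j ≤ y.length, rowMin p y = editDist p (y.take j) := by
  obtain ⟨j, hj, h⟩ := Finset.exists_mem_eq_inf' (s := Finset.range (y.length + 1))
    (by simp) (fun j => editDist p (y.take j))
  exact ⟨j, Finset.mem_range_succ_iff.mp hj, h⟩

theorem rowMin_nil_left (y : List α) : rowMin [] y = 0 :=
  Nat.eq_zero_of_le_zero <| (rowMin_le_editDist_take [] y (Nat.zero_le _)).trans_eq <| by
    simp [editDist_nil_left]

theorem rowMin_nil_right (p : List α) : rowMin p [] = p.length := by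
  simp [rowMin, editDist_nil_right]

theorem rowMin_cons_left_le (x : α) (p v : List α) :
    rowMin (x :: p) v ≤ 1 + rowMin p v := by
  obtain ⟨j, hj, h⟩ := exists_rowMin_eq_editDist_take p v
  calc rowMin (x :: p) v ≤ editDist (x :: p) (v.take j) := rowMin_le_editDist_take _ _ hj
    _ ≤ 1 + rowMin p v := h ▸ editDist_cons_left_le _ _ _

theorem rowMin_cons_right_le (p : List α) (b : α) (v : List α) :
    rowMin p (b :: v) ≤ 1 + rowMin p v := by
  obtain ⟨j, hj, h⟩ := exists_rowMin_eq_editDist_take p v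
  calc rowMin p (b :: v) ≤ editDist p ((b :: v).take (j + 1)) :=
        rowMin_le_editDist_take _ _ (by simpa using hj)
    _ = editDist p (b :: v.take j) := rfl
    _ ≤ 1 + rowMin p v := h ▸ editDist_cons_right_le _ _ _

theorem rowMin_cons_cons_le (x : α) (p : List α) (b : α) (v : List α) :
    rowMin (x :: p) (b :: v) ≤ (if x = b then 0 else 1) + rowMin p v := by
  obtain ⟨j, hj, h⟩ := exists_rowMin_eq_editDist_take p v
  calc rowMin (x :: p) (b :: v) ≤ editDist (x :: p) ((b :: v).take (j + 1)) :=
        rowMin_le_editDist_take _ _ (by simpa using hj)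
    _ = editDist (x :: p) (b :: v.take j) := rfl
    _ ≤ (if x = b then 0 else 1) + rowMin p v := h ▸ editDist_cons_cons_le _ _ _ _

theorem rowMin_le_editDist_append (p s v : List α) :
    rowMin p v ≤ editDist (p ++ s) v := by
  induction p generalizing v with
  | nil => simp [rowMin_nil_left]
  | cons x p ihp =>
    induction v with
    | nil => simp [rowMin_nil_right, editDist_nil_right]
    | cons b v ihv =>
      rw [List.cons_append, editDist_cons_cons]
      refine le_min ?_ (le_min ?_ ?_)
      · exact (rowMin_cons_left_le x p (b :: v)).trans (by gcongr; exact ihp (b :: v))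
      · exact (rowMin_cons_right_le (x :: p) b v).trans (Nat.add_le_add_left ihv 1)
      · exact (rowMin_cons_cons_le x p b v).trans (by gcongr; exact ihp v)

theorem exists_editDist_append_eq_rowMin (p y : List α) :
    ∃ s, editDist (p ++ s) y = rowMin p y := by
  obtain ⟨j, hj, h⟩ := exists_rowMin_eq_editDist_take p y
  refine ⟨y.drop j, le_antisymm ?_ (rowMin_le_editDist_append p _ y)⟩
  calc editDist (p ++ y.drop j) y
      = editDist (p ++ y.drop j) (y.take j ++ y.drop j) := by rw [List.take_append_drop]
    _ ≤ rowMin p y := h ▸ editDist_append_right_le _ _ _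

end RowMin

theorem sInf_completions_eq_rowMin {α : Type*} [DecidableEq α]
    (p ystar : List α) :
    sInf {d | ∃ s : List α, d = editDist (p ++ s) ystar} = rowMin p ystar := by
  obtain ⟨s, hs⟩ := exists_editDist_append_eq_rowMin p ystar
  refine IsLeast.csInf_eq ⟨⟨s, hs.symm⟩, ?_⟩
  rintro d ⟨s, rfl⟩
  exact rowMin_le_editDist_append p s ystar
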